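/- Let G and H be simple graphs on the vertex set {1,…,n}, each without isolated vertices and each with exactly m edges, with fixed edge enumerations e_1,…,e_m of G and e'_1,…,e'_m of H, and let S(G) and S(H) be their ternary-XOR encodings over the common variable set X ∪ Y ∪ Z. Then G and H are isomorphic as graphs if and only if there exists a permutation π of X ∪ Y ∪ Z such that π(S(G)) is equivalent to S(H). -/

import Mathlib

/-- A constraint application over a variable set `V`: a `k`-ary Boolean
constraint `C` applied to variables `vars 0, …, vars (k-1)`. -/
structure CApp (V : Type) where
  k : ℕ
  C : (Fin k → Bool) → Bool
  vars : Fin k → V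

/-- An assignment `I` satisfies a constraint application. -/
def CApp.sat {V : Type} (A : CApp V) (I : V → Bool) : Prop :=
  A.C (fun i => I (A.vars i)) = true

/-- The variable set `X ∪ Y ∪ Z` of the ternary-XOR encoding: `X` has one
variable `x_i` per vertex, `Y` one variable `y_k` per edge, and `Z` consists
of the variables `z_i` and `z'_i` for each vertex. -/
abbrev VXYZ (n m : ℕ) := Fin n ⊕ Fin m ⊕ (Fin n ⊕ Fin n)

/-- The vertex variable `x_i`. -/
def vx {n m : ℕ} (i : Fin n) : VXYZ n m := Sum.inl i

/-- The edge variable `y_k`. -/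
def vy {n m : ℕ} (k : Fin m) : VXYZ n m := Sum.inr (Sum.inl k)

/-- The auxiliary variable `z_i`. -/
def vz {n m : ℕ} (i : Fin n) : VXYZ n m := Sum.inr (Sum.inr (Sum.inl i))

/-- The auxiliary variable `z'_i`. -/
def vz' {n m : ℕ} (i : Fin n) : VXYZ n m := Sum.inr (Sum.inr (Sum.inr i))

/-- The ternary XOR constraint applied to the variables `a`, `b`, `c`. -/
def xorApp {V : Type} (a b c : V) : CApp V :=
  ⟨3, fun v => Bool.xor (v 0) (Bool.xor (v 1) (v 2)), ![a, b, c]⟩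

/-- Three edges form a triangle: they are the three edges spanned by three
distinct vertices. -/
def triangleEdges {n : ℕ} (e1 e2 e3 : Sym2 (Fin n)) : Prop :=
  ∃ a b c : Fin n, a ≠ b ∧ b ≠ c ∧ a ≠ c ∧
    e1 = s(a, b) ∧ e2 = s(b, c) ∧ e3 = s(a, c)

/-- The ternary-XOR encoding `S(G) = S_1(G) ∪ S_2(G) ∪ S_3(G)` of a graph
with edge enumeration `e`. -/
def SXor {n m : ℕ} (e : Fin m → Sym2 (Fin n)) : Set (CApp (VXYZ n m)) :=
  {A | ∃ i j : Fin n, ∃ k : Fin m, e k = s(i, j) ∧ A = xorApp (vx i) (vx j) (vy k)} ∪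
  {A | ∃ i : Fin n, A = xorApp (vx i) (vz i) (vz' i)} ∪
  {A | ∃ i j k : Fin m, triangleEdges (e i) (e j) (e k) ∧
    A = xorApp (vy i) (vy j) (vy k)}

/-- Renaming the variables of a constraint application by a permutation `π`. -/
def CApp.rename {V : Type} (π : Equiv.Perm V) (A : CApp V) : CApp V :=
  ⟨A.k, A.C, fun i => π (A.vars i)⟩

/-!
The solutions of `S(G)` form an affine space over `𝔽₂` parametrised by the free values of the
`x_i` and the `z_i`: then `y_k = ¬(x_i ⊕ x_j)` for `e_k = {i, j}`, `z'_i = ¬(x_i ⊕ z_i)`, and the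
triangle constraints hold automatically. An isomorphism `φ` of graphs induces a renaming that
carries `S(G)` onto `S(H)`.

Conversely, if `π(S(G))` is equivalent to `S(H)`, then `π` identifies the two solution spaces and
hence the XOR constraints they entail. As `G` has no isolated vertices, two solutions of `S(G)`
differing in exactly two variables can only differ at some `z_i, z'_i`; so `π` maps `Z` onto `Z`.
The entailed constraints `x_i ⊕ z_i ⊕ z'_i` of `S(H)` then force `π⁻¹` to map `x_i` to some
`x_{σ i}`, and the entailed `x_i ⊕ x_j ⊕ y_k` force `σ` to map edges of `H` to edges of `G`.
Both graphs having `m` edges, `σ` is an isomorphism.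
-/

lemma CApp.sat_xorApp {V : Type} (a b c : V) (I : V → Bool) :
    (xorApp a b c).sat I ↔ (I a ^^ (I b ^^ I c)) = true := Iff.rfl

lemma CApp.rename_xorApp {V : Type} (π : Equiv.Perm V) (a b c : V) :
    (xorApp a b c).rename π = xorApp (π a) (π b) (π c) := by
  simp only [CApp.rename, xorApp, CApp.mk.injEq, heq_eq_eq, true_and]
  funext i
  fin_cases i <;> rfl

lemma CApp.rename_rename_symm {V : Type} (π : Equiv.Perm V) (A : CApp V) :
    (A.rename π.symm).rename π = A := by
  simp [CApp.rename]

lemma Bool.eq_not_xor_of_xor_eq_true {a b c : Bool} (h : (a ^^ (b ^^ c)) = true) :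
    c = !(a ^^ b) := by
  revert h; cases a <;> cases b <;> cases c <;> decide

lemma SimpleGraph.nonempty_iso_of_adj_of_ncard_edgeSet_le {V W : Type*} [Finite W]
    {G : SimpleGraph V} {H : SimpleGraph W} (σ : V ≃ W)
    (hadj : ∀ a b, G.Adj a b → H.Adj (σ a) (σ b))
    (hcard : H.edgeSet.ncard ≤ G.edgeSet.ncard) : Nonempty (G ≃g H) := by
  have himage : Sym2.map σ '' G.edgeSet = H.edgeSet := by
    refine Set.eq_of_subset_of_ncard_le ?_ ?_ (Set.toFinite _)
    · rintro _ ⟨s, hs, rfl⟩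
      induction s using Sym2.ind with
      | _ a b => exact hadj a b hs
    · rwa [Set.ncard_image_of_injective _ (Sym2.map.injective σ.injective)]
  refine ⟨⟨σ, fun {a b} => ⟨fun h => ?_, hadj a b⟩⟩⟩
  obtain ⟨s, hs, hsab⟩ := himage.symm ▸ (show s(σ a, σ b) ∈ H.edgeSet from h)
  rw [← Sym2.map_mk, (Sym2.map.injective σ.injective).eq_iff] at hsab
  rwa [hsab] at hs

namespace XorEncoding

section edgeXor

variable {V : Type*}

def edgeXor (x : V → Bool) : Sym2 V → Bool :=
  Sym2.lift ⟨fun i j => x i ^^ x j, fun _ _ => Bool.xor_comm _ _⟩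

@[simp] lemma edgeXor_mk (x : V → Bool) (i j : V) :
    edgeXor x s(i, j) = (x i ^^ x j) := rfl

@[simp] lemma edgeXor_false (s : Sym2 V) : edgeXor (fun _ => false) s = false := by
  induction s using Sym2.ind with
  | _ i j => rfl

lemma edgeXor_indicator [DecidableEq V] {s : Sym2 V} (hs : ¬ s.IsDiag) (t : V) :
    edgeXor (fun i => decide (i = t)) s = decide (t ∈ s) := by
  induction s using Sym2.ind with
  | _ i j =>
    rw [Sym2.mk_isDiag_iff] at hs
    simp only [edgeXor_mk, Sym2.mem_iff]
    grind

lemma eq_of_edgeXor_eq [DecidableEq V] {s s' : Sym2 V} (hs : ¬ s.IsDiag) (hs' : ¬ s'.IsDiag)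
    (h : ∀ x, edgeXor x s = edgeXor x s') : s = s' := by
  ext t
  simpa [edgeXor_indicator hs, edgeXor_indicator hs'] using h (fun i => decide (i = t))

lemma edgeXor_xor (x x' : V → Bool) (s : Sym2 V) :
    (edgeXor x s ^^ edgeXor x' s) = edgeXor (fun i => x i ^^ x' i) s := by
  induction s using Sym2.ind with
  | _ i j => simp only [edgeXor_mk]; cases x i <;> cases x j <;> cases x' i <;> cases x' j <;> rfl

end edgeXor

section edgeEquiv

variable {V : Type*} {m : ℕ}

noncomputable def edgeEquiv {G : SimpleGraph V} {e : Fin m → Sym2 V}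
    (hinj : Function.Injective e) (hmem : ∀ k, e k ∈ G.edgeSet)
    (hsurj : ∀ s ∈ G.edgeSet, ∃ k, e k = s) : Fin m ≃ G.edgeSet :=
  Equiv.ofBijective (fun k => ⟨e k, hmem k⟩)
    ⟨fun _ _ h => hinj (congrArg Subtype.val h), fun s => (hsurj s s.2).imp fun _ => Subtype.ext⟩

lemma ncard_edgeSet_eq {G : SimpleGraph V} {e : Fin m → Sym2 V}
    (hinj : Function.Injective e) (hmem : ∀ k, e k ∈ G.edgeSet)
    (hsurj : ∀ s ∈ G.edgeSet, ∃ k, e k = s) : G.edgeSet.ncard = m := by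
  rw [← Nat.card_coe_set_eq, ← Nat.card_congr (edgeEquiv hinj hmem hsurj), Nat.card_fin]

end edgeEquiv

variable {n m : ℕ}

def zVars : Set (VXYZ n m) := Set.range vz ∪ Set.range vz'

lemma vx_notMem_zVars (i : Fin n) : (vx i : VXYZ n m) ∉ zVars := by
  rintro (⟨_, h⟩ | ⟨_, h⟩) <;> cases h

lemma vy_notMem_zVars (k : Fin m) : (vy k : VXYZ n m) ∉ zVars := by
  rintro (⟨_, h⟩ | ⟨_, h⟩) <;> cases h

lemma exists_eq_vx_or_vy {v : VXYZ n m} (hv : v ∉ zVars) :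
    (∃ i, v = vx i) ∨ ∃ k, v = vy k := by
  rcases v with i | k | i | i
  · exact .inl ⟨i, rfl⟩
  · exact .inr ⟨k, rfl⟩
  · exact absurd (.inl ⟨i, rfl⟩) hv
  · exact absurd (.inr ⟨i, rfl⟩) hv

/-- The solutions of the homogeneous system (every constraint `a ⊕ b ⊕ c = 0`), parametrised
by the values `x` of the `x_i` and `z` of the `z_i`. -/
def homSol (e : Fin m → Sym2 (Fin n)) (x z : Fin n → Bool) : VXYZ n m → Bool
  | .inl i => x i
  | .inr (.inl k) => edgeXor x (e k)
  | .inr (.inr (.inl i)) => z i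
  | .inr (.inr (.inr i)) => x i ^^ z i

section homSol

variable (e : Fin m → Sym2 (Fin n)) (x z : Fin n → Bool)

@[simp] lemma homSol_vx (i : Fin n) : homSol e x z (vx i) = x i := rfl
@[simp] lemma homSol_vy (k : Fin m) : homSol e x z (vy k) = edgeXor x (e k) := rfl
@[simp] lemma homSol_vz (i : Fin n) : homSol e x z (vz i) = z i := rfl
@[simp] lemma homSol_vz' (i : Fin n) : homSol e x z (vz' i) = (x i ^^ z i) := rfl

lemma homSol_xor (x' z' : Fin n → Bool) (v : VXYZ n m) :
    (homSol e x z v ^^ homSol e x' z' v) =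
      homSol e (fun i => x i ^^ x' i) (fun i => z i ^^ z' i) v := by
  rcases v with i | k | i | i
  · rfl
  · exact edgeXor_xor x x' (e k)
  · rfl
  · show ((x i ^^ z i) ^^ (x' i ^^ z' i)) = ((x i ^^ x' i) ^^ (z i ^^ z' i))
    cases x i <;> cases z i <;> cases x' i <;> cases z' i <;> rfl

end homSol

lemma homSol_false_left {e : Fin m → Sym2 (Fin n)} (z : Fin n → Bool) {a : VXYZ n m}
    (ha : a ∉ zVars) : homSol e (fun _ => false) z a = false := by
  rcases exists_eq_vx_or_vy ha with ⟨i, rfl⟩ | ⟨k, rfl⟩ <;> simp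

/-- The particular solution of `S(G)` with all `x_i` and `z_i` false. -/
def baseSol : VXYZ n m → Bool
  | .inl _ | .inr (.inr (.inl _)) => false
  | .inr (.inl _) | .inr (.inr (.inr _)) => true

def sol (e : Fin m → Sym2 (Fin n)) (x z : Fin n → Bool) (v : VXYZ n m) : Bool :=
  homSol e x z v ^^ baseSol v

def Satisfies (e : Fin m → Sym2 (Fin n)) (I : VXYZ n m → Bool) : Prop :=
  ∀ A ∈ SXor e, A.sat I

section sol

variable (e : Fin m → Sym2 (Fin n)) (x z : Fin n → Bool)

@[simp] lemma sol_vx (i : Fin n) : sol e x z (vx i) = x i := Bool.xor_false _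
@[simp] lemma sol_vy (k : Fin m) : sol e x z (vy k) = !edgeXor x (e k) := Bool.xor_true _
@[simp] lemma sol_vz (i : Fin n) : sol e x z (vz i) = z i := Bool.xor_false _
@[simp] lemma sol_vz' (i : Fin n) : sol e x z (vz' i) = !(x i ^^ z i) := Bool.xor_true _

lemma sol_xor_sol (x' z' : Fin n → Bool) (v : VXYZ n m) :
    (sol e x z v ^^ sol e x' z' v) =
      homSol e (fun i => x i ^^ x' i) (fun i => z i ^^ z' i) v := by
  simp only [sol, ← homSol_xor, Bool.xor_assoc, Bool.xor_left_comm (baseSol v), Bool.xor_self,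
    Bool.xor_false]

lemma satisfies_sol : Satisfies e (sol e x z) := by
  rintro _ ((⟨i, j, k, hk, rfl⟩ | ⟨i, rfl⟩) | ⟨i, j, k, ⟨a, b, c, -, -, -, hi, hj, hk⟩, rfl⟩)
  · rw [CApp.sat_xorApp, sol_vx, sol_vx, sol_vy, hk, edgeXor_mk]
    cases x i <;> cases x j <;> rfl
  · rw [CApp.sat_xorApp, sol_vx, sol_vz, sol_vz']
    cases x i <;> cases z i <;> rfl
  · rw [CApp.sat_xorApp, sol_vy, sol_vy, sol_vy, hi, hj, hk, edgeXor_mk, edgeXor_mk, edgeXor_mk]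
    cases x a <;> cases x b <;> cases x c <;> rfl

end sol

lemma satisfies_iff {e : Fin m → Sym2 (Fin n)} {J : VXYZ n m → Bool} :
    Satisfies e J ↔ ∃ x z, J = sol e x z := by
  refine ⟨fun hJ => ⟨J ∘ vx, J ∘ vz, funext fun v => ?_⟩,
    fun ⟨x, z, hJ⟩ => hJ ▸ satisfies_sol e x z⟩
  rcases v with i | k | i | i
  · exact (sol_vx e (J ∘ vx) (J ∘ vz) i).symm
  · obtain ⟨i, j, hk⟩ : ∃ i j, e k = s(i, j) := Sym2.exists.1 ⟨_, rfl⟩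
    have h := hJ _ (.inl (.inl ⟨i, j, k, hk, rfl⟩))
    rw [CApp.sat_xorApp] at h
    show J (vy k) = sol e (J ∘ vx) (J ∘ vz) (vy k)
    rw [Bool.eq_not_xor_of_xor_eq_true h, sol_vy, hk, edgeXor_mk]
    rfl
  · exact (sol_vz e (J ∘ vx) (J ∘ vz) i).symm
  · have h := hJ _ (.inl (.inr ⟨i, rfl⟩))
    rw [CApp.sat_xorApp] at h
    exact (Bool.eq_not_xor_of_xor_eq_true h).trans (sol_vz' e (J ∘ vx) (J ∘ vz) i).symm

def Entails (e : Fin m → Sym2 (Fin n)) (a b c : VXYZ n m) : Prop :=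
  ∀ J, Satisfies e J → (xorApp a b c).sat J

lemma entails_of_mem {e : Fin m → Sym2 (Fin n)} {a b c : VXYZ n m}
    (h : xorApp a b c ∈ SXor e) : Entails e a b c :=
  fun _ hJ => hJ _ h

lemma Entails.homSol_eq_xor {e : Fin m → Sym2 (Fin n)} {a b c : VXYZ n m}
    (h : Entails e a b c) (x z : Fin n → Bool) :
    homSol e x z c = (homSol e x z a ^^ homSol e x z b) := by
  have hsol : ∀ v, homSol e x z v = (sol e x z v ^^ sol e (fun _ => false) (fun _ => false) v) :=
    fun v => by simp only [sol_xor_sol, Bool.xor_false]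
  have h₁ := h _ (satisfies_sol e x z)
  have h₀ := h _ (satisfies_sol e (fun _ => false) (fun _ => false))
  rw [CApp.sat_xorApp] at h₁ h₀
  rw [hsol, hsol, hsol]
  revert h₁ h₀
  cases sol e x z a <;> cases sol e x z b <;> cases sol e x z c <;>
    cases sol e (fun _ => false) (fun _ => false) a <;>
    cases sol e (fun _ => false) (fun _ => false) b <;>
    cases sol e (fun _ => false) (fun _ => false) c <;> decide

section

variable {e : Fin m → Sym2 (Fin n)}

/-- If some `x_i` is true, the support of `homSol e x z` contains `x_i`, one of `z_i, z'_i`,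
and, for an edge `{i, j}`, one of `x_j, y_{ij}`: it has at least three elements. -/
lemma mem_zVars_of_homSol_eq_true (hcover : ∀ i, ∃ k, i ∈ e k) (hloop : ∀ k, ¬ (e k).IsDiag)
    {x z : Fin n → Bool} {a b : VXYZ n m} (hab : ∀ v, homSol e x z v = true → v = a ∨ v = b)
    {v : VXYZ n m} (hv : homSol e x z v = true) : v ∈ zVars := by
  obtain rfl : x = fun _ => false := by
    funext i
    by_contra hi
    rw [Bool.not_eq_false] at hi
    obtain ⟨k, hik⟩ := hcover i
    obtain ⟨j, hek⟩ := Sym2.mem_iff_exists.1 hik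
    have hji : j ≠ i := fun h => hloop k (by rw [hek, h, Sym2.mk_isDiag_iff])
    obtain ⟨w, hw, hwZ⟩ : ∃ w, homSol e x z w = true ∧ w ∈ zVars := by
      cases hz : z i
      · exact ⟨vz' i, by simp [hi, hz], .inr ⟨i, rfl⟩⟩
      · exact ⟨vz i, by simp [hz], .inl ⟨i, rfl⟩⟩
    obtain ⟨u, hu, huZ, hui⟩ : ∃ u, homSol e x z u = true ∧ u ∉ zVars ∧ u ≠ vx i := by
      cases hj : x j
      · exact ⟨vy k, by simp [hek, hi, hj], vy_notMem_zVars k, by simp [vy, vx]⟩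
      · exact ⟨vx _, by simpa using hj, vx_notMem_zVars _, by simpa [vx] using hji⟩
    have hxw : vx i ≠ w := fun h => vx_notMem_zVars i (h ▸ hwZ)
    have huw : u ≠ w := fun h => huZ (h ▸ hwZ)
    have := hab _ (show homSol e x z (vx i) = true from hi)
    have := hab _ hw
    have := hab _ hu
    grind
  by_contra hvZ
  exact absurd hv (by simp [homSol_false_left z hvZ])

lemma exists_homSol_eq_of_entails {a b c : VXYZ n m} (h : Entails e a b c) (ha : a ∉ zVars)
    (hb : b ∈ zVars) (hc : c ∈ zVars) (hbc : b ≠ c) :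
    ∃ p, ∀ x, homSol e x (fun _ => false) a = x p := by
  have hz : ∀ p, homSol e (fun _ => false) (fun i => decide (i = p)) b =
      homSol e (fun _ => false) (fun i => decide (i = p)) c := fun p => by
    simpa [homSol_false_left _ ha] using (h.homSol_eq_xor (fun _ => false) _).symm
  have hx := fun x => h.homSol_eq_xor x (fun _ => false)
  rcases hb with ⟨p, rfl⟩ | ⟨p, rfl⟩ <;> rcases hc with ⟨q, rfl⟩ | ⟨q, rfl⟩
  · exact absurd (by simpa using hz p) fun hqp : q = p => hbc (by rw [hqp])
  · exact ⟨q, fun x => by simpa using (hx x).symm⟩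
  · exact ⟨p, fun x => by simpa using (hx x).symm⟩
  · exact absurd (by simpa using hz p) fun hqp : q = p => hbc (by rw [hqp])

lemma eq_vx_of_homSol_eq (hloop : ∀ k, ¬ (e k).IsDiag) {a : VXYZ n m} (ha : a ∉ zVars) {p : Fin n}
    (h : ∀ x, homSol e x (fun _ => false) a = x p) : a = vx p := by
  rcases exists_eq_vx_or_vy ha with ⟨u, rfl⟩ | ⟨k, rfl⟩
  · obtain rfl : p = u := by simpa using h (fun i => decide (i = u))
    rfl
  · refine absurd ?_ (hloop k)
    have hek : e k = s(p, p) := Sym2.ext fun t => by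
      have ht := h (fun i => decide (i = t))
      rw [homSol_vy, edgeXor_indicator (hloop k)] at ht
      exact (decide_eq_decide.1 ht).trans (by simp [eq_comm])
    rw [hek, Sym2.mk_isDiag_iff]

lemma exists_eq_vy_of_homSol_eq (hloop : ∀ k, ¬ (e k).IsDiag) {c : VXYZ n m} (hc : c ∉ zVars)
    {s t : Fin n} (hst : s ≠ t) (h : ∀ x, homSol e x (fun _ => false) c = (x s ^^ x t)) :
    ∃ k, c = vy k ∧ e k = s(s, t) := by
  rcases exists_eq_vx_or_vy hc with ⟨u, rfl⟩ | ⟨k, rfl⟩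
  · have hs := h (fun i => decide (i = s))
    have ht := h (fun i => decide (i = t))
    simp only [homSol_vx] at hs ht
    grind
  · exact ⟨k, rfl, eq_of_edgeXor_eq (hloop k) (by simpa using hst) h⟩

end

section

variable {e e' : Fin m → Sym2 (Fin n)} {π : Equiv.Perm (VXYZ n m)}

lemma Entails.perm (hπ : ∀ I, Satisfies e (I ∘ π) ↔ Satisfies e' I) {a b c : VXYZ n m}
    (h : Entails e' a b c) : Entails e (π.symm a) (π.symm b) (π.symm c) :=
  fun J hJ => h (J ∘ π.symm) ((hπ _).1 (by rwa [Function.comp_assoc, Equiv.symm_comp_self]))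

lemma mapsTo_symm_zVars (hcover : ∀ i, ∃ k, i ∈ e k) (hloop : ∀ k, ¬ (e k).IsDiag)
    (hπ : ∀ I, Satisfies e (I ∘ π) ↔ Satisfies e' I) : Set.MapsTo π.symm zVars zVars := by
  suffices h : ∀ i, π.symm (vz i) ∈ zVars ∧ π.symm (vz' i) ∈ zVars by
    rintro _ (⟨i, rfl⟩ | ⟨i, rfl⟩)
    exacts [(h i).1, (h i).2]
  intro i
  have hdiff : ∀ v, (sol e' (fun _ => false) (fun _ => false) v ^^
      sol e' (fun _ => false) (fun t => decide (t = i)) v) = true ↔ v = vz i ∨ v = vz' i := by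
    rintro (t | k | t | t) <;> simp [sol_xor_sol, homSol, vz, vz']
  obtain ⟨x, z, hJ⟩ :=
    satisfies_iff.1 ((hπ _).2 (satisfies_sol e' (fun _ => false) (fun _ => false)))
  obtain ⟨x', z', hJ'⟩ :=
    satisfies_iff.1 ((hπ _).2 (satisfies_sol e' (fun _ => false) (fun t => decide (t = i))))
  have hsupp : ∀ v, homSol e (fun i => x i ^^ x' i) (fun i => z i ^^ z' i) v = true ↔
      v = π.symm (vz i) ∨ v = π.symm (vz' i) := by
    intro v
    rw [← sol_xor_sol, ← congrFun hJ, ← congrFun hJ', Function.comp_apply, Function.comp_apply,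
      hdiff, Equiv.eq_symm_apply, Equiv.eq_symm_apply]
  exact ⟨mem_zVars_of_homSol_eq_true hcover hloop (fun v => (hsupp v).1) ((hsupp _).2 (.inl rfl)),
    mem_zVars_of_homSol_eq_true hcover hloop (fun v => (hsupp v).1) ((hsupp _).2 (.inr rfl))⟩

lemma symm_mem_zVars_iff (hcover : ∀ i, ∃ k, i ∈ e k) (hloop : ∀ k, ¬ (e k).IsDiag)
    (hπ : ∀ I, Satisfies e (I ∘ π) ↔ Satisfies e' I) (v : VXYZ n m) :
    π.symm v ∈ zVars ↔ v ∈ zVars := by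
  have hmaps := mapsTo_symm_zVars hcover hloop hπ
  have hbij := ((Set.toFinite zVars).injOn_iff_bijOn_of_mapsTo hmaps).1 π.symm.injective.injOn
  refine ⟨fun hv => ?_, fun hv => hmaps hv⟩
  obtain ⟨u, hu, huv⟩ := hbij.surjOn hv
  rwa [← π.symm.injective huv]

lemma exists_symm_vx_eq (hcover : ∀ i, ∃ k, i ∈ e k) (hloop : ∀ k, ¬ (e k).IsDiag)
    (hπ : ∀ I, Satisfies e (I ∘ π) ↔ Satisfies e' I) (i : Fin n) : ∃ t, π.symm (vx i) = vx t := by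
  have hZ := symm_mem_zVars_iff hcover hloop hπ
  obtain ⟨p, hp⟩ := exists_homSol_eq_of_entails ((entails_of_mem (.inl (.inr ⟨i, rfl⟩))).perm hπ)
    ((hZ _).not.2 (vx_notMem_zVars i)) ((hZ _).2 (.inl ⟨i, rfl⟩)) ((hZ _).2 (.inr ⟨i, rfl⟩))
    (π.symm.injective.ne (by simp [vz, vz']))
  exact ⟨p, eq_vx_of_homSol_eq hloop ((hZ _).not.2 (vx_notMem_zVars i)) hp⟩

lemma exists_edge_of_symm_vx_eq (hcover : ∀ i, ∃ k, i ∈ e k) (hloop : ∀ k, ¬ (e k).IsDiag)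
    (hπ : ∀ I, Satisfies e (I ∘ π) ↔ Satisfies e' I) {i j : Fin n} {k : Fin m}
    (hk : e' k = s(i, j)) (hij : i ≠ j) {s t : Fin n} (hs : π.symm (vx i) = vx s)
    (ht : π.symm (vx j) = vx t) : ∃ k', e k' = s(s, t) := by
  have h := (entails_of_mem (.inl (.inl ⟨i, j, k, hk, rfl⟩))).perm hπ
  rw [hs, ht] at h
  have hst : s ≠ t := by
    rintro rfl
    exact hij (by simpa [vx] using π.symm.injective (hs.trans ht.symm))
  obtain ⟨k', -, hk'⟩ := exists_eq_vy_of_homSol_eq hloop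
    ((symm_mem_zVars_iff hcover hloop hπ _).not.2 (vy_notMem_zVars k)) hst
    (fun x => by simpa using h.homSol_eq_xor x (fun _ => false))
  exact ⟨k', hk'⟩

end

lemma nonempty_iso_of_perm {G H : SimpleGraph (Fin n)} (hGiso : ∀ v, ∃ w, G.Adj v w)
    {e e' : Fin m → Sym2 (Fin n)} (heinj : Function.Injective e) (hemem : ∀ k, e k ∈ G.edgeSet)
    (hesurj : ∀ s ∈ G.edgeSet, ∃ k, e k = s) (he'inj : Function.Injective e')
    (he'mem : ∀ k, e' k ∈ H.edgeSet) (he'surj : ∀ s ∈ H.edgeSet, ∃ k, e' k = s)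
    {π : Equiv.Perm (VXYZ n m)} (hπ : ∀ I, Satisfies e (I ∘ π) ↔ Satisfies e' I) :
    Nonempty (G ≃g H) := by
  have hloop : ∀ k, ¬ (e k).IsDiag := fun k => G.not_isDiag_of_mem_edgeSet (hemem k)
  have hcover : ∀ i, ∃ k, i ∈ e k := fun i => by
    obtain ⟨j, hij⟩ := hGiso i
    obtain ⟨k, hk⟩ := hesurj _ (G.mem_edgeSet.2 hij)
    exact ⟨k, hk ▸ Sym2.mem_mk_left i j⟩
  choose σ hσ using exists_symm_vx_eq hcover hloop hπ
  have hσinj : Function.Injective σ := fun i j hij =>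
    Sum.inl_injective (π.symm.injective ((hσ i).trans ((congrArg vx hij).trans (hσ j).symm)))
  have hadj : ∀ i j, H.Adj i j → G.Adj (σ i) (σ j) := fun i j hij => by
    obtain ⟨k, hk⟩ := he'surj _ (H.mem_edgeSet.2 hij)
    obtain ⟨k', hk'⟩ := exists_edge_of_symm_vx_eq hcover hloop hπ hk hij.ne (hσ i) (hσ j)
    exact G.mem_edgeSet.1 (hk' ▸ hemem k')
  obtain ⟨ψ⟩ := SimpleGraph.nonempty_iso_of_adj_of_ncard_edgeSet_le
    (Equiv.ofBijective σ hσinj.bijective_of_finite) hadj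
    (by rw [ncard_edgeSet_eq heinj hemem hesurj, ncard_edgeSet_eq he'inj he'mem he'surj])
  exact ⟨ψ.symm⟩

def relabel (φ : Equiv.Perm (Fin n)) (κ : Equiv.Perm (Fin m)) : Equiv.Perm (VXYZ n m) :=
  Equiv.sumCongr φ (Equiv.sumCongr κ (Equiv.sumCongr φ φ))

lemma relabel_symm (φ : Equiv.Perm (Fin n)) (κ : Equiv.Perm (Fin m)) :
    (relabel φ κ).symm = relabel φ.symm κ.symm := by
  simp only [relabel, Equiv.sumCongr_symm]

lemma triangleEdges_map {φ : Fin n → Fin n} (hφ : Function.Injective φ)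
    {s₁ s₂ s₃ : Sym2 (Fin n)} (h : triangleEdges s₁ s₂ s₃) :
    triangleEdges (s₁.map φ) (s₂.map φ) (s₃.map φ) := by
  obtain ⟨a, b, c, hab, hbc, hac, rfl, rfl, rfl⟩ := h
  exact ⟨φ a, φ b, φ c, hφ.ne hab, hφ.ne hbc, hφ.ne hac, rfl, rfl, rfl⟩

section

variable {e e' : Fin m → Sym2 (Fin n)}

lemma image_rename_relabel_subset (φ : Equiv.Perm (Fin n)) (κ : Equiv.Perm (Fin m))
    (h : ∀ k, e' (κ k) = (e k).map φ) : CApp.rename (relabel φ κ) '' SXor e ⊆ SXor e' := by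
  rintro _ ⟨_, (⟨i, j, k, hk, rfl⟩ | ⟨i, rfl⟩) | ⟨i, j, k, htri, rfl⟩, rfl⟩ <;>
    rw [CApp.rename_xorApp]
  · exact .inl (.inl ⟨φ i, φ j, κ k, by rw [h, hk, Sym2.map_mk], rfl⟩)
  · exact .inl (.inr ⟨φ i, rfl⟩)
  · exact .inr ⟨κ i, κ j, κ k, by simpa only [h] using triangleEdges_map φ.injective htri, rfl⟩

lemma image_rename_relabel (φ : Equiv.Perm (Fin n)) (κ : Equiv.Perm (Fin m))
    (h : ∀ k, e' (κ k) = (e k).map φ) : CApp.rename (relabel φ κ) '' SXor e = SXor e' := by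
  refine (image_rename_relabel_subset φ κ h).antisymm fun A hA =>
    ⟨A.rename (relabel φ κ).symm, ?_, CApp.rename_rename_symm _ _⟩
  have h' : ∀ k, e (κ.symm k) = (e' k).map φ.symm := fun k => by
    rw [← κ.apply_symm_apply k, h, Sym2.map_map, κ.symm_apply_apply, Equiv.symm_comp_self,
      Sym2.map_id, id]
  rw [relabel_symm]
  exact image_rename_relabel_subset φ.symm κ.symm h' ⟨A, hA, rfl⟩

end

end XorEncoding

open XorEncoding in
theorem stmt_18_general {n m : ℕ} (G H : SimpleGraph (Fin n))
    (hGiso : ∀ v : Fin n, ∃ w : Fin n, G.Adj v w)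
    (e e' : Fin m → Sym2 (Fin n))
    (heinj : Function.Injective e) (hemem : ∀ k : Fin m, e k ∈ G.edgeSet)
    (hesurj : ∀ s ∈ G.edgeSet, ∃ k : Fin m, e k = s)
    (he'inj : Function.Injective e') (he'mem : ∀ k : Fin m, e' k ∈ H.edgeSet)
    (he'surj : ∀ s ∈ H.edgeSet, ∃ k : Fin m, e' k = s) :
    Nonempty (G ≃g H) ↔
      ∃ π : Equiv.Perm (VXYZ n m), ∀ I : VXYZ n m → Bool,
        (∀ A ∈ SXor e, (A.rename π).sat I) ↔ (∀ A ∈ SXor e', A.sat I) := by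
  constructor
  · rintro ⟨φ⟩
    let κ : Equiv.Perm (Fin m) := (edgeEquiv heinj hemem hesurj).trans
      (φ.mapEdgeSet.trans (edgeEquiv he'inj he'mem he'surj).symm)
    have hκ : ∀ k, e' (κ k) = (e k).map φ := fun k =>
      congrArg Subtype.val ((edgeEquiv he'inj he'mem he'surj).apply_symm_apply _)
    refine ⟨relabel φ.toEquiv κ, fun I => ?_⟩
    rw [← image_rename_relabel φ.toEquiv κ hκ, Set.forall_mem_image]
  · rintro ⟨π, hπ⟩
    exact nonempty_iso_of_perm hGiso heinj hemem hesurj he'inj he'mem he'surj hπ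

/-- Let `G` and `H` be graphs on `{1,…,n}` without isolated vertices, each
with exactly `m` edges enumerated by `e` and `e'`. Then `G` and `H` are
isomorphic iff there is a permutation `π` of `X ∪ Y ∪ Z` such that
`π(S(G))` is equivalent to `S(H)`. -/
theorem stmt_18 {n m : ℕ} (G H : SimpleGraph (Fin n))
    (hGiso : ∀ v : Fin n, ∃ w : Fin n, G.Adj v w)
    (hHiso : ∀ v : Fin n, ∃ w : Fin n, H.Adj v w)
    (e e' : Fin m → Sym2 (Fin n))
    (heinj : Function.Injective e) (hemem : ∀ k : Fin m, e k ∈ G.edgeSet)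
    (hesurj : ∀ s ∈ G.edgeSet, ∃ k : Fin m, e k = s)
    (he'inj : Function.Injective e') (he'mem : ∀ k : Fin m, e' k ∈ H.edgeSet)
    (he'surj : ∀ s ∈ H.edgeSet, ∃ k : Fin m, e' k = s) :
    Nonempty (G ≃g H) ↔
      ∃ π : Equiv.Perm (VXYZ n m), ∀ I : VXYZ n m → Bool,
        (∀ A ∈ SXor e, (A.rename π).sat I) ↔ (∀ A ∈ SXor e', A.sat I) :=
  stmt_18_general G H hGiso e e' heinj hemem hesurj he'inj he'mem he'surj
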